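/- arXiv:2308.08049 — 5 statements merged into one kernel-verified Lean document; each statement's English description precedes it below -/
import Mathlib

section
/- Let N and M be dual finite-dimensional real vector spaces with a perfect pairing ⟨·,·⟩, and let F ⊆ N be a simplicial cone with ray generators γ₁,…,γ_d forming a basis of N. For a nonzero vector χ ∈ M, the hyperplane H_χ = {λ ∈ N : ⟨λ,χ⟩ = 0} satisfies H_χ ∩ F ≠ {0} if and only if χ lies in (⋃_{i=1}^d {χ' : ⟨γ_i,χ'⟩ ≥ 0}) \ (⋂_{i=1}^d {χ' : ⟨γ_i,χ'⟩ > 0}). -/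
/-!
A nonzero vector `v` of the cone has nonnegative, not all zero, coordinates `aᵢ`, and
`⟨v, χ⟩ = ∑ aᵢ ⟨γᵢ, χ⟩`; this sum vanishes only if the values `⟨γᵢ, χ⟩` are neither all positive
nor all negative. Conversely, if `⟨γᵢ, χ⟩ > 0 ≥ ⟨γⱼ, χ⟩`, then `⟨γᵢ, χ⟩ γⱼ - ⟨γⱼ, χ⟩ γᵢ` is a
nonzero vector of `H_χ ∩ F`, and if `⟨γᵢ, χ⟩ = 0`, then `γᵢ` is one.
-/

theorem exists_nonneg_and_exists_nonpos_of_sum_mul_eq_zero {R ι : Type*} [Ring R] [LinearOrder R]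
    [IsStrictOrderedRing R] [Fintype ι] {a c : ι → R}
    (ha : ∀ i, 0 ≤ a i) (ha₀ : a ≠ 0) (h : ∑ i, a i * c i = 0) :
    (∃ i, 0 ≤ c i) ∧ ∃ j, c j ≤ 0 := by
  obtain ⟨k, hk⟩ : ∃ k, 0 < a k := by
    by_contra! hle
    exact ha₀ (funext fun i => le_antisymm (hle i) (ha i))
  constructor
  · by_contra! hneg
    refine (Finset.sum_neg' (fun i _ => ?_)
      ⟨k, Finset.mem_univ k, mul_neg_of_pos_of_neg hk (hneg k)⟩).ne h
    exact mul_nonpos_of_nonneg_of_nonpos (ha i) (hneg i).le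
  · by_contra! hpos
    refine (Finset.sum_pos' (fun i _ => ?_) ⟨k, Finset.mem_univ k, mul_pos hk (hpos k)⟩).ne' h
    exact mul_nonneg (ha i) (hpos i).le

namespace Module.Basis

variable {K ι N : Type*} [Field K] [AddCommGroup N] [Module K N] [Fintype ι]

theorem apply_eq_sum_equivFun_mul (γ : Basis ι K N) (φ : N →ₗ[K] K) (v : N) :
    φ v = ∑ i, γ.equivFun v i * φ (γ i) := by
  nth_rw 1 [← γ.sum_equivFun v]
  simp only [map_sum, map_smul, smul_eq_mul]

variable [LinearOrder K]

def simplicialCone (γ : Basis ι K N) : Set N :=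
  {v | ∃ a : ι → K, (∀ i, 0 ≤ a i) ∧ v = ∑ i, a i • γ i}

theorem mem_simplicialCone_iff (γ : Basis ι K N) {v : N} :
    v ∈ γ.simplicialCone ↔ ∀ i, 0 ≤ γ.equivFun v i := by
  constructor
  · rintro ⟨a, ha, rfl⟩
    rwa [← γ.equivFun_symm_apply, LinearEquiv.apply_symm_apply]
  · exact fun h => ⟨γ.equivFun v, h, (γ.sum_equivFun v).symm⟩

theorem zero_mem_simplicialCone (γ : Basis ι K N) : (0 : N) ∈ γ.simplicialCone :=
  γ.mem_simplicialCone_iff.2 (by simp)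

variable [IsStrictOrderedRing K]

theorem exists_mem_simplicialCone_ne_zero_apply_eq_zero (γ : Basis ι K N) (φ : N →ₗ[K] K)
    {i j : ι} (hi : 0 ≤ φ (γ i)) (hj : φ (γ j) ≤ 0) :
    ∃ v ∈ γ.simplicialCone, v ≠ 0 ∧ φ v = 0 := by
  classical
  rcases hi.eq_or_lt with hi₀ | hi
  · refine ⟨γ i, γ.mem_simplicialCone_iff.2 fun k => ?_, γ.ne_zero i, hi₀.symm⟩
    simp [apply_ite]
  have hij : j ≠ i := by
    rintro rfl
    exact hj.not_gt hi
  refine ⟨φ (γ i) • γ j - φ (γ j) • γ i, γ.mem_simplicialCone_iff.2 fun k => ?_, fun h => ?_,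
    by simp [mul_comm]⟩
  · simp only [map_sub, map_smul, equivFun_self, Pi.sub_apply, Pi.smul_apply, smul_eq_mul]
    split_ifs <;> nlinarith
  · exact hi.ne' (by simpa [hij] using congrArg (fun v => γ.equivFun v j) h)

theorem nontrivial_setOf_apply_eq_zero_inter_simplicialCone_iff (γ : Basis ι K N)
    (φ : N →ₗ[K] K) :
    ({v | φ v = 0} ∩ γ.simplicialCone).Nontrivial ↔ (∃ i, 0 ≤ φ (γ i)) ∧ ∃ j, φ (γ j) ≤ 0 := by
  have h₀ : (0 : N) ∈ {v | φ v = 0} ∩ γ.simplicialCone := ⟨map_zero φ, γ.zero_mem_simplicialCone⟩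
  rw [Set.nontrivial_iff_exists_ne h₀]
  constructor
  · rintro ⟨v, ⟨hφv, hv⟩, hv₀⟩
    exact exists_nonneg_and_exists_nonpos_of_sum_mul_eq_zero (γ.mem_simplicialCone_iff.1 hv)
      (γ.equivFun.map_ne_zero_iff.2 hv₀) (γ.apply_eq_sum_equivFun_mul φ v ▸ hφv)
  · rintro ⟨⟨i, hi⟩, j, hj⟩
    obtain ⟨v, hv, hv₀, hφv⟩ := γ.exists_mem_simplicialCone_ne_zero_apply_eq_zero φ hi hj
    exact ⟨v, ⟨hφv, hv⟩, hv₀⟩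

end Module.Basis

theorem stmt0_general {N M : Type*} [AddCommGroup N] [Module ℝ N] [AddCommGroup M] [Module ℝ M]
    {d : ℕ} (B : N →ₗ[ℝ] M →ₗ[ℝ] ℝ)
    (γ : Module.Basis (Fin d) ℝ N)
    (F : Set N) (hF : F = {v : N | ∃ a : Fin d → ℝ, (∀ i, 0 ≤ a i) ∧ v = ∑ i, a i • γ i})
    (χ : M) :
    {l : N | B l χ = 0} ∩ F ≠ {0} ↔
      χ ∈ (⋃ i : Fin d, {χ' : M | 0 ≤ B (γ i) χ'}) \
          (⋂ i : Fin d, {χ' : M | 0 < B (γ i) χ'}) := by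
  subst hF
  change {l : N | B.flip χ l = 0} ∩ γ.simplicialCone ≠ {0} ↔ _
  have h₀ : (0 : N) ∈ {l : N | B.flip χ l = 0} ∩ γ.simplicialCone :=
    ⟨map_zero _, γ.zero_mem_simplicialCone⟩
  rw [← Set.nontrivial_iff_ne_singleton h₀,
    γ.nontrivial_setOf_apply_eq_zero_inter_simplicialCone_iff]
  simp

/-- For a perfect pairing between `N` and `M` and the simplicial cone `F`
generated by a basis `γ` of `N`, the hyperplane `H_χ` of a nonzero `χ ∈ M` meets `F`
nontrivially iff `χ` lies in `(⋃ i, Ξ_{γᵢ ≥ 0}) \ (⋂ i, Ξ_{γᵢ > 0})`. -/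
theorem stmt0 {N M : Type*} [AddCommGroup N] [Module ℝ N] [AddCommGroup M] [Module ℝ M]
    {d : ℕ} (B : N →ₗ[ℝ] M →ₗ[ℝ] ℝ)
    (hB1 : ∀ n : N, (∀ m : M, B n m = 0) → n = 0)
    (hB2 : ∀ m : M, (∀ n : N, B n m = 0) → m = 0)
    (γ : Module.Basis (Fin d) ℝ N)
    (F : Set N) (hF : F = {v : N | ∃ a : Fin d → ℝ, (∀ i, 0 ≤ a i) ∧ v = ∑ i, a i • γ i})
    (χ : M) (hχ : χ ≠ 0) :
    {l : N | B l χ = 0} ∩ F ≠ {0} ↔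
      χ ∈ (⋃ i : Fin d, {χ' : M | 0 ≤ B (γ i) χ'}) \
          (⋂ i : Fin d, {χ' : M | 0 < B (γ i) χ'}) :=
  stmt0_general B γ F hF χ
end

section
/- Let Ξ be a finite subset of a d-dimensional real vector space M whose convex hull is d-dimensional. Let λ be a linear functional on M and suppose Ξ_{λ>0} := {χ ∈ Ξ : λ(χ) > 0} is maximal among all sets of the form Ξ_{μ>0} as μ ranges over nonzero linear functionals (ordered by inclusion). Then the convex hull of Ξ_{λ>0} has dimension at least d−1. -/
/-!
If `conv Ξ_{λ>0}` had dimension below `d - 1`, the linear span of `Ξ_{λ>0}` would be a proper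
subspace, so some functional `ν ≠ 0` vanishes on `Ξ_{λ>0}`. As `Ξ` spans `M`, `ν` is nonzero at
some `χ₀ ∈ Ξ`, and the tilted functional `μ = λ + t ν` with `μ χ₀ = 1` agrees with `λ` on
`Ξ_{λ>0}`; hence `Ξ_{λ>0} ⊊ Ξ_{μ>0}`, contradicting maximality.
-/

open Module Submodule

section DivisionRing

variable {k V : Type*} [DivisionRing k] [AddCommGroup V] [Module k V]

variable (k) in
theorem finrank_span_le_finrank_vectorSpan_add_one (s : Set V) :
    finrank k (span k s) ≤ finrank k (vectorSpan k s) + 1 := by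
  have h : vectorSpan k (insert 0 s) = span k s := by
    rw [vectorSpan_eq_span_vsub_set_right k (Set.mem_insert 0 s)]
    simp
  exact h ▸ finrank_vectorSpan_insert_le_set k s 0

theorem span_eq_top_of_affineSpan_eq_top {s : Set V} (hs : affineSpan k s = ⊤) :
    span k s = ⊤ :=
  eq_top_iff.2 fun x _ => affineSpan_subset_span (hs ▸ AffineSubspace.mem_top k V x)

theorem Module.Dual.exists_mem_apply_ne_zero_of_span_eq_top {s : Set V} (hs : span k s = ⊤)
    {f : Dual k V} (hf : f ≠ 0) : ∃ x ∈ s, f x ≠ 0 := by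
  by_contra! h
  exact hf (LinearMap.ext_on hs h)

end DivisionRing

theorem Module.Dual.exists_ne_zero_setOf_pos_ssubset {K V : Type*} [Field K] [LinearOrder K]
    [IsStrictOrderedRing K] [AddCommGroup V] [Module K V] {X : Set V} {lam ν : Dual K V}
    (hν : ∀ x ∈ X, 0 < lam x → ν x = 0) {x₀ : V} (hx₀ : x₀ ∈ X) (hνx₀ : ν x₀ ≠ 0) :
    ∃ μ : Dual K V, μ ≠ 0 ∧ {x | x ∈ X ∧ 0 < lam x} ⊂ {x | x ∈ X ∧ 0 < μ x} := by
  set μ := lam + ((1 - lam x₀) / ν x₀) • ν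
  have hμ_eq : ∀ x, ν x = 0 → μ x = lam x := fun x hx => by simp [μ, hx]
  have hμx₀ : μ x₀ = 1 := by
    simp only [μ, LinearMap.add_apply, LinearMap.smul_apply, smul_eq_mul]
    field_simp
    ring
  refine ⟨μ, fun h => by simp [h] at hμx₀, ?_, ?_⟩
  · rintro x ⟨hx, hpos⟩
    exact ⟨hx, hμ_eq x (hν x hx hpos) ▸ hpos⟩
  · intro h
    obtain ⟨-, hpos⟩ := h ⟨hx₀, hμx₀ ▸ one_pos⟩
    exact hνx₀ (hν x₀ hx₀ hpos)

theorem stmt2_general {M : Type*} [AddCommGroup M] [Module ℝ M] [FiniteDimensional ℝ M]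
    (Ξ : Finset M) (hfull : affineSpan ℝ (Ξ : Set M) = ⊤)
    (lam : Module.Dual ℝ M)
    (hmax : ∀ μ : Module.Dual ℝ M, μ ≠ 0 →
      {χ : M | χ ∈ Ξ ∧ 0 < lam χ} ⊆ {χ : M | χ ∈ Ξ ∧ 0 < μ χ} →
      {χ : M | χ ∈ Ξ ∧ 0 < lam χ} = {χ : M | χ ∈ Ξ ∧ 0 < μ χ}) :
    Module.finrank ℝ M - 1 ≤
      Module.finrank ℝ (affineSpan ℝ {χ : M | χ ∈ Ξ ∧ 0 < lam χ}).direction := by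
  set S : Set M := {χ : M | χ ∈ Ξ ∧ 0 < lam χ}
  by_contra! hlow
  have hspan : finrank ℝ (span ℝ S) < finrank ℝ M := by
    have := finrank_span_le_finrank_vectorSpan_add_one ℝ S
    rw [direction_affineSpan] at hlow
    omega
  obtain ⟨ν, hν0, hνS⟩ := (span ℝ S).exists_le_ker_of_lt_top (lt_top_of_finrank_lt_finrank hspan)
  obtain ⟨χ₀, hχ₀, hνχ₀⟩ := Module.Dual.exists_mem_apply_ne_zero_of_span_eq_top
    (span_eq_top_of_affineSpan_eq_top hfull) hν0
  obtain ⟨μ, hμ0, hssub⟩ := Module.Dual.exists_ne_zero_setOf_pos_ssubset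
    (fun χ hχ hpos => hνS (subset_span ⟨hχ, hpos⟩)) hχ₀ hνχ₀
  exact hssub.ne (hmax μ hμ0 hssub.subset)

/-- If `Ξ` is a finite subset of a `d`-dimensional real vector space whose convex
hull is full-dimensional and `Ξ_{λ>0}` is maximal among the sets `Ξ_{μ>0}` for nonzero linear
functionals `μ`, then `conv(Ξ_{λ>0})` has dimension at least `d - 1`. -/
theorem stmt2 {M : Type*} [AddCommGroup M] [Module ℝ M] [FiniteDimensional ℝ M]
    (Ξ : Finset M) (hfull : affineSpan ℝ (Ξ : Set M) = ⊤)
    (lam : Module.Dual ℝ M) (hlam : lam ≠ 0)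
    (hmax : ∀ μ : Module.Dual ℝ M, μ ≠ 0 →
      {χ : M | χ ∈ Ξ ∧ 0 < lam χ} ⊆ {χ : M | χ ∈ Ξ ∧ 0 < μ χ} →
      {χ : M | χ ∈ Ξ ∧ 0 < lam χ} = {χ : M | χ ∈ Ξ ∧ 0 < μ χ}) :
    Module.finrank ℝ M - 1 ≤
      Module.finrank ℝ (affineSpan ℝ {χ : M | χ ∈ Ξ ∧ 0 < lam χ}).direction :=
  stmt2_general Ξ hfull lam hmax
end

section
/- Let Ξ be a finite subset of a d-dimensional real vector space M whose convex hull is d-dimensional, let λ be a nonzero linear functional on M, and suppose Ξ_{λ>0} = {χ ∈ Ξ : λ(χ) > 0} is maximal among all sets Ξ_{μ>0} for nonzero linear functionals μ, and that conv(Ξ_{λ>0}) has dimension exactly d−1. Then Ξ_{λ>0} is not contained in any hyperplane of M passing through the origin. -/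
/-!
If `μ ≠ 0` vanished on `Ξ_{λ>0}`, pick `χ₀ ∈ Ξ` with `μ χ₀ ≠ 0` (it exists since `Ξ`
spans `M` affinely) and move `λ` along `μ` to some `ν` with `ν χ₀ = 1`. Then `ν = λ` on `Ξ_{λ>0} ⊆ ker μ`, so `Ξ_{λ>0} ⊆ Ξ_{ν>0}`, and the inclusion is
strict because `χ₀ ∉ Ξ_{λ>0}`.
-/

theorem Module.Dual.exists_mem_apply_ne_zero_of_affineSpan_eq_top {K V : Type*} [Field K]
    [AddCommGroup V] [Module K V] {s : Set V} (hs : affineSpan K s = ⊤)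
    {μ : Module.Dual K V} (hμ : μ ≠ 0) : ∃ x ∈ s, μ x ≠ 0 := by
  by_contra! h
  have hspan : affineSpan K s ≤ (LinearMap.ker μ).toAffineSubspace :=
    affineSpan_le.mpr fun x hx => by simpa using h x hx
  refine hμ (LinearMap.ext fun x => ?_)
  have hx : x ∈ (LinearMap.ker μ).toAffineSubspace := hspan (hs ▸ AffineSubspace.mem_top K V x)
  simpa using hx

theorem Module.Dual.exists_apply_eq_one_and_eqOn_ker {K V : Type*} [Field K]
    [AddCommGroup V] [Module K V] (lam : Module.Dual K V) {μ : Module.Dual K V} {x₀ : V}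
    (hx₀ : μ x₀ ≠ 0) : ∃ ν : Module.Dual K V, ν x₀ = 1 ∧ ∀ x, μ x = 0 → ν x = lam x := by
  refine ⟨lam + ((1 - lam x₀) / μ x₀) • μ, ?_, fun x hx => by simp [hx]⟩
  simp [div_mul_cancel₀ _ hx₀]

theorem stmt3_general {M : Type*} [AddCommGroup M] [Module ℝ M]
    (Ξ : Finset M) (hfull : affineSpan ℝ (Ξ : Set M) = ⊤)
    (lam : Module.Dual ℝ M)
    (hmax : ∀ μ : Module.Dual ℝ M, μ ≠ 0 →
      {χ : M | χ ∈ Ξ ∧ 0 < lam χ} ⊆ {χ : M | χ ∈ Ξ ∧ 0 < μ χ} →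
      {χ : M | χ ∈ Ξ ∧ 0 < lam χ} = {χ : M | χ ∈ Ξ ∧ 0 < μ χ}) :
    ∀ μ : Module.Dual ℝ M, μ ≠ 0 → ¬ (∀ χ ∈ Ξ, 0 < lam χ → μ χ = 0) := by
  intro μ hμ hvanish
  obtain ⟨χ₀, hχ₀Ξ, hμχ₀⟩ :=
    Module.Dual.exists_mem_apply_ne_zero_of_affineSpan_eq_top hfull hμ
  obtain ⟨ν, hνχ₀, hν⟩ := Module.Dual.exists_apply_eq_one_and_eqOn_ker lam hμχ₀
  have hν_ne : ν ≠ 0 := fun h => by simp [h] at hνχ₀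
  have hsubset : {χ : M | χ ∈ Ξ ∧ 0 < lam χ} ⊆ {χ : M | χ ∈ Ξ ∧ 0 < ν χ} :=
    fun χ ⟨hχΞ, hχ⟩ => ⟨hχΞ, hν χ (hvanish χ hχΞ hχ) ▸ hχ⟩
  have hχ₀ : χ₀ ∈ {χ : M | χ ∈ Ξ ∧ 0 < lam χ} :=
    hmax ν hν_ne hsubset ▸ ⟨hχ₀Ξ, hνχ₀ ▸ one_pos⟩
  exact hμχ₀ (hvanish χ₀ hχ₀Ξ hχ₀.2)

/-- If moreover `conv(Ξ_{λ>0})` has dimension exactly `d - 1`, then `Ξ_{λ>0}`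
is not contained in any hyperplane through the origin. -/
theorem stmt3 {M : Type*} [AddCommGroup M] [Module ℝ M] [FiniteDimensional ℝ M]
    (Ξ : Finset M) (hfull : affineSpan ℝ (Ξ : Set M) = ⊤)
    (lam : Module.Dual ℝ M) (hlam : lam ≠ 0)
    (hmax : ∀ μ : Module.Dual ℝ M, μ ≠ 0 →
      {χ : M | χ ∈ Ξ ∧ 0 < lam χ} ⊆ {χ : M | χ ∈ Ξ ∧ 0 < μ χ} →
      {χ : M | χ ∈ Ξ ∧ 0 < lam χ} = {χ : M | χ ∈ Ξ ∧ 0 < μ χ})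
    (hdim : Module.finrank ℝ (affineSpan ℝ {χ : M | χ ∈ Ξ ∧ 0 < lam χ}).direction =
      Module.finrank ℝ M - 1) :
    ∀ μ : Module.Dual ℝ M, μ ≠ 0 → ¬ (∀ χ ∈ Ξ, 0 < lam χ → μ χ = 0) :=
  stmt3_general Ξ hfull lam hmax
end

section
/- Let W be a finite group acting linearly on a finite-dimensional real vector space M such that the only W-invariant vector is 0. Let Ξ ⊂ M be a nonempty finite W-invariant set that spans M, and assume |W| > dim M. Then the origin lies in the interior of the convex hull of Ξ. -/
/-- For a finite group `W` acting linearly on `M` with `M^W = {0}`, a nonempty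
finite `W`-stable spanning subset `Ξ` with `|W| > dim M` has `0` in the interior of its
convex hull. -/
theorem stmt7 {M : Type*} [NormedAddCommGroup M] [NormedSpace ℝ M] [FiniteDimensional ℝ M]
    {W : Type*} [Group W] [Fintype W] (ρ : Representation ℝ W M)
    (hinv : ∀ v : M, (∀ g : W, ρ g v = v) → v = 0)
    (Ξ : Finset M) (hne : Ξ.Nonempty)
    (hstab : ∀ g : W, ∀ χ ∈ Ξ, ρ g χ ∈ Ξ)
    (hspan : Submodule.span ℝ (Ξ : Set M) = ⊤)
    (hcard : Module.finrank ℝ M < Fintype.card W) :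
    (0 : M) ∈ interior (convexHull ℝ (Ξ : Set M)) := by
  classical
  set C : Set M := convexHull ℝ (Ξ : Set M) with hC
  have hconv : Convex ℝ C := convex_convexHull ℝ _
  -- averaging: the sum over the group of the orbit of any vector is 0
  have hsum : ∀ χ : M, (∑ g : W, ρ g χ) = 0 := by
    intro χ
    apply hinv
    intro h
    rw [map_sum]
    exact Fintype.sum_equiv (Equiv.mulLeft h) _ _ (fun g => by
      simp [map_mul ρ, Module.End.mul_apply])
  -- 0 is in the convex hull
  obtain ⟨χ₀, hχ₀⟩ := hne
  have h0 : (0 : M) ∈ C := by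
    have hcm := Finset.centerMass_mem_convexHull (Finset.univ : Finset W)
      (w := fun _ => (1 : ℝ)) (z := fun g => ρ g χ₀)
      (fun i _ => zero_le_one)
      (by simp [Finset.card_univ, Fintype.card_pos])
      (fun g _ => hstab g χ₀ hχ₀)
    rwa [Finset.centerMass, Finset.sum_congr rfl (fun g _ => one_smul ℝ (ρ g χ₀)),
      hsum χ₀, smul_zero] at hcm
  -- the affine span of Ξ is everything
  have haff : affineSpan ℝ (Ξ : Set M) = ⊤ := by
    have h0' : (0 : M) ∈ affineSpan ℝ (Ξ : Set M) := convexHull_subset_affineSpan _ h0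
    rw [← affineSpan_insert_eq_affineSpan (k := ℝ) h0', ← AffineSubspace.coe_eq_univ_iff,
      affineSpan_insert_zero, hspan, Submodule.top_coe]
  -- hence the interior of the hull is nonempty
  have hint : (interior C).Nonempty := by
    rw [hconv.interior_nonempty_iff_affineSpan_eq_top, hC, affineSpan_convexHull]
    exact haff
  by_contra hmem
  obtain ⟨f, hf⟩ := geometric_hahn_banach_open_point (hconv.interior) isOpen_interior hmem
  have hf0 : ∀ a ∈ interior C, f a < 0 := by simpa using hf
  obtain ⟨a, ha⟩ := hint
  have hfa : f a < 0 := hf0 a ha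
  -- f is nonpositive on C
  have hle : ∀ x ∈ C, f x ≤ 0 := by
    intro x hx
    by_contra hpos
    push_neg at hpos
    set A : ℝ := -f a with hA
    set B : ℝ := f x with hB
    have hApos : 0 < A := by simp only [hA]; linarith
    have hABpos : 0 < A + B := by linarith
    set t : ℝ := A / (A + B) with ht
    have ht0 : 0 < t := div_pos hApos hABpos
    have ht1 : t < 1 := by rw [ht, div_lt_one hABpos]; linarith
    have hy : (1 - t) • a + t • x ∈ interior C := by
      apply hconv.openSegment_interior_closure_subset_interior ha (subset_closure hx)
      exact ⟨1 - t, t, by linarith, ht0, by ring, rfl⟩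
    have hval : f ((1 - t) • a + t • x) = (1 - t) * f a + t * f x := by
      simp [map_add, map_smul]
    have htAB : t * (A + B) = A := div_mul_cancel₀ A (ne_of_gt hABpos)
    have := hf0 _ hy
    rw [hval] at this
    have hfa' : f a = -A := by simp [hA]
    nlinarith
  -- f vanishes on Ξ
  have hvan : ∀ χ ∈ Ξ, f χ = 0 := by
    intro χ hχ
    have hsum' : ∑ g : W, f (ρ g χ) = 0 := by
      rw [← map_sum, hsum, map_zero]
    have hnp : ∀ g ∈ (Finset.univ : Finset W), f (ρ g χ) ≤ 0 := fun g _ =>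
      hle _ (subset_convexHull ℝ (Ξ : Set M) (hstab g χ hχ))
    have hall := (Finset.sum_eq_zero_iff_of_nonpos hnp).1 hsum'
    have h1 := hall 1 (Finset.mem_univ 1)
    simpa using h1
  -- hence f = 0, contradiction
  have hfzero : ∀ x : M, f x = 0 := by
    intro x
    have hx : x ∈ Submodule.span ℝ (Ξ : Set M) := by rw [hspan]; trivial
    induction hx using Submodule.span_induction with
    | mem y hy => exact hvan y hy
    | zero => exact map_zero f
    | add y z _ _ hy hz => rw [map_add, hy, hz, add_zero]
    | smul c y _ hy => rw [map_smul, hy, smul_zero]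
  exact absurd (hfzero a) (ne_of_lt hfa)
end

section
/- Let N and M be dual d-dimensional real vector spaces and let χ₁, χ₂ ∈ M be two non-proportional nonzero vectors. Let F ⊂ N be the simplicial cone generated by a basis γ₁,…,γ_d, and let φ : N → ℝ² be the map λ ↦ (⟨λ,χ₁⟩, ⟨λ,χ₂⟩). Then span(χ₁,χ₂)^⊥ ∩ F ≠ {0} if and only if 0 lies in the interior of conv(φ(γ₁),…,φ(γ_d)) or φ(F) = ℝ². More precisely: φ(F) = ℝ² if and only if 0 ∈ int conv(φ(γ₁),…,φ(γ_d)). -/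
/-!
Since `φ` is linear, `φ(F)` is the cone spanned by the points `pᵢ = φ(γᵢ)`, while their convex
hull `K` consists of the nonnegative combinations normalised to total weight one. Hence
`φ(F) = ℝ²` says exactly that every nonzero vector has a positive multiple in `K`, i.e. that the
convex set `K` is absorbent. In finite dimension an absorbent convex set is a neighbourhood of
`0`: its gauge is a real-valued convex function, hence continuous, and `{gauge K < 1} ⊆ K`.
Conversely, every neighbourhood of `0` is absorbent.
-/

open Set Filter Topology

section Cone

variable {ι E : Type*} [Fintype ι] [AddCommGroup E] [Module ℝ E]

def nonnegCombinations (p : ι → E) : Set E :=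
  {v | ∃ a : ι → ℝ, (∀ i, 0 ≤ a i) ∧ v = ∑ i, a i • p i}

theorem LinearMap.image_nonnegCombinations {F : Type*} [AddCommGroup F] [Module ℝ F]
    (f : E →ₗ[ℝ] F) (p : ι → E) : f '' nonnegCombinations p = nonnegCombinations (f ∘ p) := by
  ext w
  simp [nonnegCombinations, map_sum, map_smul, eq_comm]

theorem convexHull_range_eq_image_stdSimplex (p : ι → E) :
    convexHull ℝ (range p) = Fintype.linearCombination ℝ p '' stdSimplex ℝ ι := by
  classical
  rw [← convexHull_rangle_single_eq_stdSimplex, LinearMap.image_convexHull, ← range_comp]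
  congr 1
  ext i
  simp

theorem exists_pos_smul_mem_convexHull {p : ι → E} {v : E} (hv : v ∈ nonnegCombinations p)
    (hv₀ : v ≠ 0) : ∃ c : ℝ, 0 < c ∧ c • v ∈ convexHull ℝ (range p) := by
  obtain ⟨a, ha, rfl⟩ := hv
  have hsum : 0 < ∑ i, a i := by
    refine (Finset.sum_nonneg fun i _ => ha i).lt_of_ne' fun h => hv₀ ?_
    rw [Finset.sum_eq_zero_iff_of_nonneg fun i _ => ha i] at h
    simp [h]
  exact ⟨(∑ i, a i)⁻¹, inv_pos.2 hsum,
    Finset.univ.centerMass_mem_convexHull (z := p) (fun i _ => ha i) hsum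
      fun i _ => mem_range_self i⟩

theorem mem_nonnegCombinations_of_smul_mem_convexHull {p : ι → E} {v : E} {c : ℝ} (hc : 0 < c)
    (hcv : c • v ∈ convexHull ℝ (range p)) : v ∈ nonnegCombinations p := by
  rw [convexHull_range_eq_image_stdSimplex] at hcv
  obtain ⟨w, hw, hwv⟩ := hcv
  refine ⟨c⁻¹ • w, fun i => smul_nonneg (inv_nonneg.2 hc.le) (hw.1 i), ?_⟩
  rw [← Fintype.linearCombination_apply, map_smul, hwv, inv_smul_smul₀ hc.ne']

end Cone

section Absorbent

variable {E : Type*} [AddCommGroup E] [Module ℝ E] {s : Set E}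

theorem Convex.absorbent_of_forall_ne_zero [Nontrivial E] (hs : Convex ℝ s)
    (h : ∀ x : E, x ≠ 0 → ∃ c : ℝ, 0 < c ∧ c • x ∈ s) : Absorbent ℝ s := by
  have Icc_smul_mem :
      ∀ x : E, x ≠ 0 → ∃ a : ℝ, a < 0 ∧ ∃ b : ℝ, 0 < b ∧ ∀ t ∈ Icc a b, t • x ∈ s := by
    intro x hx
    obtain ⟨b, hb, hbx⟩ := h x hx
    obtain ⟨a, ha, hax⟩ := h (-x) (neg_ne_zero.2 hx)
    have hconv : Convex ℝ ((· • x) ⁻¹' s) := hs.linear_preimage (LinearMap.toSpanSingleton ℝ E x)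
    refine ⟨-a, neg_lt_zero.2 ha, b, hb, fun t ht => hconv.ordConnected.out ?_ hbx ht⟩
    rwa [mem_preimage, neg_smul, ← smul_neg]
  have h₀ : (0 : E) ∈ s := by
    obtain ⟨y, hy⟩ := exists_ne (0 : E)
    obtain ⟨a, ha, b, hb, hab⟩ := Icc_smul_mem y hy
    simpa using hab 0 ⟨ha.le, hb.le⟩
  refine absorbent_iff_eventually_nhdsNE_zero.2 fun x => ?_
  rcases eq_or_ne x 0 with rfl | hx
  · simp [h₀]
  · obtain ⟨a, ha, b, hb, hab⟩ := Icc_smul_mem x hx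
    exact eventually_nhdsWithin_of_eventually_nhds (eventually_of_mem (Icc_mem_nhds ha hb) hab)

theorem convexOn_gauge (hs : Convex ℝ s) (hs_abs : Absorbent ℝ s) :
    ConvexOn ℝ univ (gauge s) := by
  refine ⟨convex_univ, fun x _ y _ a b ha hb _ => ?_⟩
  calc gauge s (a • x + b • y) ≤ gauge s (a • x) + gauge s (b • y) := gauge_add_le hs hs_abs _ _
    _ = a • gauge s x + b • gauge s y := by rw [gauge_smul_of_nonneg ha, gauge_smul_of_nonneg hb]

end Absorbent

theorem Convex.mem_nhds_zero_of_absorbent {E : Type*} [NormedAddCommGroup E] [NormedSpace ℝ E]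
    [FiniteDimensional ℝ E] {s : Set E} (hs : Convex ℝ s) (hs_abs : Absorbent ℝ s) :
    s ∈ 𝓝 0 := by
  have hcont : Continuous (gauge s) :=
    continuousOn_univ.1 ((convexOn_gauge hs hs_abs).continuousOn isOpen_univ)
  exact mem_of_superset ((isOpen_lt hcont continuous_const).mem_nhds (by simp [gauge_zero]))
    (setOfPred_gauge_lt_one_subset_self hs hs_abs.zero_mem hs_abs)

theorem nonnegCombinations_eq_univ_iff {ι E : Type*} [Fintype ι] [NormedAddCommGroup E]
    [NormedSpace ℝ E] [FiniteDimensional ℝ E] [Nontrivial E] (p : ι → E) :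
    nonnegCombinations p = univ ↔ (0 : E) ∈ interior (convexHull ℝ (range p)) := by
  rw [mem_interior_iff_mem_nhds]
  constructor
  · intro h
    refine (convex_convexHull ℝ _).mem_nhds_zero_of_absorbent
      ((convex_convexHull ℝ _).absorbent_of_forall_ne_zero fun x hx => ?_)
    exact exists_pos_smul_mem_convexHull (h ▸ mem_univ x) hx
  · refine fun h => eq_univ_of_forall fun v => ?_
    have hlim : Tendsto (fun c : ℝ => c • v) (𝓝[>] 0) (𝓝 0) :=
      ((continuous_id.smul continuous_const).tendsto' 0 0 (zero_smul ℝ v)).mono_left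
        nhdsWithin_le_nhds
    obtain ⟨c, hcv, hc⟩ := ((hlim.eventually_mem h).and self_mem_nhdsWithin).exists
    exact mem_nonnegCombinations_of_smul_mem_convexHull hc hcv

theorem stmt10_general {N M : Type*} [AddCommGroup N] [Module ℝ N] [AddCommGroup M] [Module ℝ M]
    {d : ℕ} (B : N →ₗ[ℝ] M →ₗ[ℝ] ℝ)
    (γ : Module.Basis (Fin d) ℝ N)
    (F : Set N) (hF : F = {v : N | ∃ a : Fin d → ℝ, (∀ i, 0 ≤ a i) ∧ v = ∑ i, a i • γ i})
    (χ₁ χ₂ : M)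
    (φ : N → ℝ × ℝ) (hφ : φ = fun l => (B l χ₁, B l χ₂)) :
    φ '' F = Set.univ ↔
      (0 : ℝ × ℝ) ∈ interior (convexHull ℝ (Set.range fun i : Fin d => φ (γ i))) := by
  have hφ' : φ = (B.flip χ₁).prod (B.flip χ₂) := hφ
  have hF' : F = nonnegCombinations γ := hF
  rw [hF', hφ', LinearMap.image_nonnegCombinations]
  exact nonnegCombinations_eq_univ_iff _

/-- criterion for essential pairs: for non-proportional nonzero `χ₁, χ₂ ∈ M`
and `φ(λ) = (⟨λ,χ₁⟩, ⟨λ,χ₂⟩)`, one has `φ(F) = ℝ²` iff `0` is in the interior of the convex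
hull of the `φ(γᵢ)`. -/
theorem stmt10 {N M : Type*} [AddCommGroup N] [Module ℝ N] [AddCommGroup M] [Module ℝ M]
    {d : ℕ} (B : N →ₗ[ℝ] M →ₗ[ℝ] ℝ)
    (hB1 : ∀ n : N, (∀ m : M, B n m = 0) → n = 0)
    (hB2 : ∀ m : M, (∀ n : N, B n m = 0) → m = 0)
    (γ : Module.Basis (Fin d) ℝ N)
    (F : Set N) (hF : F = {v : N | ∃ a : Fin d → ℝ, (∀ i, 0 ≤ a i) ∧ v = ∑ i, a i • γ i})
    (χ₁ χ₂ : M) (h1 : χ₁ ≠ 0) (h2 : χ₂ ≠ 0)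
    (hprop : ∀ c : ℝ, χ₂ ≠ c • χ₁)
    (φ : N → ℝ × ℝ) (hφ : φ = fun l => (B l χ₁, B l χ₂)) :
    φ '' F = Set.univ ↔
      (0 : ℝ × ℝ) ∈ interior (convexHull ℝ (Set.range fun i : Fin d => φ (γ i))) :=
  stmt10_general B γ F hF χ₁ χ₂ φ hφ
end
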